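/- arXiv:2306.08385 — 4 statements merged into one kernel-verified Lean document; each statement's English description precedes it below -/
import Mathlib

section
/- Let α ∈ (0,∞)^n with Σ_i α_i = 1, and let g_1,...,g_n be i.i.d. standard Gumbel random variables. Then for each index k, P(log α_k + g_k > log α_i + g_i for all i ≠ k) = α_k. -/
/-!
Write `F x = exp (-exp (-x))` for the Gumbel CDF. Conditionally on `g k = t`, independence turns
the event into `∏_{i ≠ k} F (t - log (α i / α k))`, and `F (x - log c) = F x ^ c` collapses this
product to `F t ^ β` with `β = ∑_{i ≠ k} α i / α k = 1 / α k - 1`. Since `F (g k)` is uniformly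
distributed on `(0, 1]`, the probability is `E [F (g k) ^ β] = ∫₀¹ u ^ β du = 1 / (β + 1) = α k`.
-/

open MeasureTheory ProbabilityTheory Set Filter Real Topology

noncomputable def gumbelCDF (x : ℝ) : ℝ := exp (-exp (-x))

lemma gumbelCDF_pos (x : ℝ) : 0 < gumbelCDF x := exp_pos _

lemma gumbelCDF_lt_one (x : ℝ) : gumbelCDF x < 1 :=
  exp_lt_one_iff.2 (neg_neg_of_pos (exp_pos _))

lemma strictMono_gumbelCDF : StrictMono gumbelCDF := fun x y hxy => by
  unfold gumbelCDF; gcongr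

lemma continuous_gumbelCDF : Continuous gumbelCDF := by
  unfold gumbelCDF; fun_prop

lemma gumbelCDF_neg_log_neg_log {u : ℝ} (hu₀ : 0 < u) (hu₁ : u < 1) :
    gumbelCDF (-log (-log u)) = u := by
  rw [gumbelCDF, neg_neg, exp_log (neg_pos.2 (log_neg hu₀ hu₁)), neg_neg, exp_log hu₀]

lemma gumbelCDF_sub_log (x : ℝ) {c : ℝ} (hc : 0 < c) :
    gumbelCDF (x - log c) = gumbelCDF x ^ c := by
  rw [gumbelCDF, gumbelCDF, rpow_def_of_pos (exp_pos _), log_exp, neg_sub, sub_eq_add_neg,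
    add_comm, exp_add, exp_log hc]
  ring_nf

lemma measure_lt_of_continuous_cdf {Ω : Type*} [MeasurableSpace Ω] {μ : Measure Ω}
    {X : Ω → ℝ} {F : ℝ → ℝ} (hF : Continuous F)
    (hX : ∀ x, μ {ω | X ω ≤ x} = ENNReal.ofReal (F x)) (x : ℝ) :
    μ {ω | X ω < x} = ENNReal.ofReal (F x) := by
  have hF' : Tendsto (fun y => ENNReal.ofReal (F y)) (𝓝[<] x) (𝓝 (ENNReal.ofReal (F x))) :=
    (ENNReal.continuous_ofReal.comp hF).continuousAt.tendsto.mono_left nhdsWithin_le_nhds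
  refine le_antisymm (hX x ▸ measure_mono fun ω hω => le_of_lt (α := ℝ) hω) (le_of_tendsto hF' ?_)
  filter_upwards [self_mem_nhdsWithin] with y (hy : y < x)
  exact hX y ▸ measure_mono fun ω (hω : X ω ≤ y) => hω.trans_lt hy

lemma map_gumbelCDF_eq_restrict_Ioc {ν : Measure ℝ} [IsProbabilityMeasure ν]
    (hν : ∀ x, ν (Iic x) = ENNReal.ofReal (gumbelCDF x)) :
    ν.map gumbelCDF = volume.restrict (Ioc 0 1) := by
  refine (Measure.ext_of_Iic _ _ fun u => ?_).symm
  rw [Measure.map_apply continuous_gumbelCDF.measurable measurableSet_Iic,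
    Measure.restrict_apply measurableSet_Iic]
  rcases lt_or_ge u 1 with hu₁ | hu₁
  · rw [Iic_inter_Ioc_of_le hu₁.le, Real.volume_Ioc, sub_zero]
    rcases le_or_gt u 0 with hu₀ | hu₀
    · have : gumbelCDF ⁻¹' Iic u = ∅ :=
        eq_empty_of_forall_notMem fun x hx => (hu₀.trans_lt (gumbelCDF_pos x)).not_ge hx
      rw [this, measure_empty, ENNReal.ofReal_of_nonpos hu₀]
    · have : gumbelCDF ⁻¹' Iic u = Iic (-log (-log u)) := by
        ext x
        conv_lhs => rw [mem_preimage, mem_Iic, ← gumbelCDF_neg_log_neg_log hu₀ hu₁]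
        exact strictMono_gumbelCDF.le_iff_le
      rw [this, hν, gumbelCDF_neg_log_neg_log hu₀ hu₁]
  · have : gumbelCDF ⁻¹' Iic u = univ :=
      eq_univ_of_forall fun x => ((gumbelCDF_lt_one x).trans_le hu₁).le
    rw [this, measure_univ, inter_eq_right.2 (Ioc_subset_Iic_self.trans (Iic_subset_Iic.2 hu₁)),
      Real.volume_Ioc, sub_zero, ENNReal.ofReal_one]

lemma lintegral_gumbelCDF_rpow {ν : Measure ℝ} [IsProbabilityMeasure ν]
    (hν : ∀ x, ν (Iic x) = ENNReal.ofReal (gumbelCDF x)) {β : ℝ} (hβ : -1 < β) :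
    ∫⁻ x, ENNReal.ofReal (gumbelCDF x ^ β) ∂ν = ENNReal.ofReal (β + 1)⁻¹ := by
  have hβ₁ : β + 1 ≠ 0 := by linarith
  calc ∫⁻ x, ENNReal.ofReal (gumbelCDF x ^ β) ∂ν
      = ∫⁻ u, ENNReal.ofReal (u ^ β) ∂(ν.map gumbelCDF) :=
        (lintegral_map (measurable_id.pow_const β).ennreal_ofReal
          continuous_gumbelCDF.measurable).symm
    _ = ∫⁻ u in Ioc 0 1, ENNReal.ofReal (u ^ β) := by rw [map_gumbelCDF_eq_restrict_Ioc hν]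
    _ = ENNReal.ofReal (∫ u in Ioc 0 1, u ^ β) :=
        (ofReal_integral_eq_lintegral_ofReal (intervalIntegral.intervalIntegrable_rpow' hβ).1
          (ae_restrict_of_forall_mem measurableSet_Ioc fun u hu => rpow_nonneg hu.1.le β)).symm
    _ = ENNReal.ofReal (β + 1)⁻¹ := by
        rw [← intervalIntegral.integral_of_le zero_le_one, integral_rpow (Or.inl hβ), one_rpow,
          zero_rpow hβ₁, sub_zero, one_div]

namespace ProbabilityTheory

lemma IndepFun.measure_prodMk_preimage {Ω α β : Type*} [MeasurableSpace Ω] [MeasurableSpace α]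
    [MeasurableSpace β] {μ : Measure Ω} [IsFiniteMeasure μ] {X : Ω → α} {Y : Ω → β}
    (hXY : IndepFun X Y μ) (hX : Measurable X) (hY : Measurable Y) {s : Set (α × β)}
    (hs : MeasurableSet s) :
    μ ((fun ω => (X ω, Y ω)) ⁻¹' s) = ∫⁻ x, μ (Y ⁻¹' (Prod.mk x ⁻¹' s)) ∂μ.map X := by
  rw [← Measure.map_apply (hX.prodMk hY) hs,
    (indepFun_iff_map_prod_eq_prod_map_map hX.aemeasurable hY.aemeasurable).1 hXY,
    Measure.prod_apply hs]
  simp_rw [Measure.map_apply hY (measurable_prodMk_left hs)]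

lemma iIndepFun.indepFun_finset_of_notMem {Ω ι β : Type*} [MeasurableSpace Ω] [MeasurableSpace β]
    {μ : Measure Ω} {f : ι → Ω → β} (hf : iIndepFun f μ) (hf_meas : ∀ i, Measurable (f i))
    {S : Finset ι} {k : ι} (hk : k ∉ S) :
    IndepFun (f k) (fun ω (i : S) => f i ω) μ :=
  (hf.indepFun_finset {k} S (Finset.disjoint_singleton_left.2 hk) hf_meas).comp
    (measurable_pi_apply (⟨k, Finset.mem_singleton_self k⟩ : ({k} : Finset ι))) measurable_id

lemma iIndepFun.measure_forall_lt_sub_log {Ω ι : Type*} [MeasurableSpace Ω] {μ : Measure Ω}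
    {g : ι → Ω → ℝ} (hindep : iIndepFun g μ)
    (hcdf : ∀ i x, μ {ω | g i ω ≤ x} = ENNReal.ofReal (gumbelCDF x))
    (S : Finset ι) {c : ι → ℝ} (hc : ∀ i ∈ S, 0 < c i) (t : ℝ) :
    μ {ω | ∀ i ∈ S, g i ω < t - log (c i)} = ENNReal.ofReal (gumbelCDF t ^ ∑ i ∈ S, c i) := by
  have hinter : {ω | ∀ i ∈ S, g i ω < t - log (c i)} = ⋂ i ∈ S, g i ⁻¹' Iio (t - log (c i)) := by
    ext ω; simp
  rw [hinter, hindep.meas_biInter fun i _ => ⟨Iio _, measurableSet_Iio, rfl⟩,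
    rpow_sum_of_pos (gumbelCDF_pos t),
    ENNReal.ofReal_prod_of_nonneg fun i _ => rpow_nonneg (gumbelCDF_pos t).le _]
  refine Finset.prod_congr rfl fun i hi => ?_
  rw [← gumbelCDF_sub_log t (hc i hi)]
  exact measure_lt_of_continuous_cdf continuous_gumbelCDF (hcdf i) _

lemma iIndepFun.measure_forall_lt_sub_log_eq_inv {Ω ι : Type*} [MeasurableSpace Ω]
    {μ : Measure Ω} {g : ι → Ω → ℝ} (hindep : iIndepFun g μ) (hg : ∀ i, Measurable (g i))
    (hcdf : ∀ i x, μ {ω | g i ω ≤ x} = ENNReal.ofReal (gumbelCDF x))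
    {S : Finset ι} {k : ι} (hk : k ∉ S) {c : ι → ℝ} (hc : ∀ i ∈ S, 0 < c i) :
    μ {ω | ∀ i ∈ S, g i ω < g k ω - log (c i)} = ENNReal.ofReal (∑ i ∈ S, c i + 1)⁻¹ := by
  have := hindep.isProbabilityMeasure
  have := Measure.isProbabilityMeasure_map (μ := μ) (hg k).aemeasurable
  set Y : Ω → (S → ℝ) := fun ω i => g i ω
  have hY : Measurable Y := measurable_pi_lambda _ fun i => hg i
  set E : Set (ℝ × (S → ℝ)) := {p | ∀ i : S, p.2 i < p.1 - log (c i)}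
  have hE : MeasurableSet E := by
    simp only [E, ofPred_forall]
    exact MeasurableSet.iInter fun i =>
      measurableSet_lt (measurable_pi_apply i |>.comp measurable_snd) (measurable_fst.sub_const _)
  have hevent : {ω | ∀ i ∈ S, g i ω < g k ω - log (c i)} = (fun ω => (g k ω, Y ω)) ⁻¹' E := by
    ext ω; simp [E, Y]
  have hsection (t : ℝ) :
      μ (Y ⁻¹' (Prod.mk t ⁻¹' E)) = ENNReal.ofReal (gumbelCDF t ^ ∑ i ∈ S, c i) := by
    rw [← hindep.measure_forall_lt_sub_log hcdf S hc t]
    congr 1; ext ω; simp [E, Y]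
  have hcdf_k (x : ℝ) : μ.map (g k) (Iic x) = ENNReal.ofReal (gumbelCDF x) := by
    rw [Measure.map_apply (hg k) measurableSet_Iic]; exact hcdf k x
  have hβ : -1 < ∑ i ∈ S, c i := by
    linarith [Finset.sum_nonneg fun i hi => (hc i hi).le]
  rw [hevent, (hindep.indepFun_finset_of_notMem hg hk).measure_prodMk_preimage (hg k) hY hE,
    lintegral_congr hsection, lintegral_gumbelCDF_rpow hcdf_k hβ]

end ProbabilityTheory

theorem gumbel_max_trick_general {Ω : Type*} [MeasurableSpace Ω] (μ : Measure Ω)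
    (n : ℕ) (α : Fin n → ℝ) (hα : ∀ i, 0 < α i)
    (hsum : ∑ i, α i = 1) (g : Fin n → Ω → ℝ) (hg : ∀ i, Measurable (g i))
    (hindep : iIndepFun g μ)
    (hcdf : ∀ i x, μ {ω | g i ω ≤ x} = ENNReal.ofReal (Real.exp (-Real.exp (-x))))
    (k : Fin n) :
    μ {ω | ∀ i, i ≠ k → Real.log (α i) + g i ω < Real.log (α k) + g k ω}
      = ENNReal.ofReal (α k) := by
  have hevent : {ω | ∀ i, i ≠ k → log (α i) + g i ω < log (α k) + g k ω}
      = {ω | ∀ i ∈ Finset.univ.erase k, g i ω < g k ω - log (α i / α k)} := by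
    ext ω
    simp only [mem_ofPred_eq, Finset.mem_erase, Finset.mem_univ, and_true,
      log_div (hα _).ne' (hα k).ne']
    refine forall₂_congr fun i _ => ?_
    constructor <;> intro h <;> linarith
  have hweights : ∑ i ∈ Finset.univ.erase k, α i / α k + 1 = (α k)⁻¹ := by
    rw [← Finset.sum_div, ← div_self (hα k).ne', ← add_div,
      Finset.sum_erase_add _ _ (Finset.mem_univ k), hsum, one_div]
  rw [hevent, hindep.measure_forall_lt_sub_log_eq_inv hg hcdf (Finset.notMem_erase k _)
    (fun i _ => div_pos (hα i) (hα k)), hweights, inv_inv]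

/-- Gumbel-max trick: if `α ∈ (0,∞)^n` sums to one and `g_1, ..., g_n` are i.i.d. standard
Gumbel random variables (CDF `exp(-exp(-x))`), then for each `k`,
`P(log α_k + g_k > log α_i + g_i, ∀ i ≠ k) = α_k`. -/
theorem gumbel_max_trick {Ω : Type*} [MeasurableSpace Ω] (μ : Measure Ω)
    [IsProbabilityMeasure μ] (n : ℕ) (α : Fin n → ℝ) (hα : ∀ i, 0 < α i)
    (hsum : ∑ i, α i = 1) (g : Fin n → Ω → ℝ) (hg : ∀ i, Measurable (g i))
    (hindep : iIndepFun g μ)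
    (hcdf : ∀ i x, μ {ω | g i ω ≤ x} = ENNReal.ofReal (Real.exp (-Real.exp (-x))))
    (k : Fin n) :
    μ {ω | ∀ i, i ≠ k → Real.log (α i) + g i ω < Real.log (α k) + g k ω}
      = ENNReal.ofReal (α k) :=
  gumbel_max_trick_general μ n α hα hsum g hg hindep hcdf k
end

section
/- Let w ~ N(0, I_d) and x, y ∈ ℝ^d. Define the single positive random feature estimator Z = exp(wᵀx - ‖x‖²/2) · exp(wᵀy - ‖y‖²/2). Then E[Z] = exp(xᵀy), i.e., Z is an unbiased estimator of the softmax kernel SM(x,y) = exp(xᵀy). -/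
/-!
Since `exp(wᵀx - ‖x‖²/2) · exp(wᵀy - ‖y‖²/2) = exp(xᵀy) · exp(wᵀc - ‖c‖²/2)`
with `c = x + y`, it suffices that `E[exp(wᵀc - ‖c‖²/2)] = 1`. The coordinates of `w` are
independent, so `E[exp(wᵀc)] = ∏ᵢ E[exp(cᵢwᵢ)] = ∏ᵢ exp(cᵢ²/2)` by the
Gaussian moment generating function.
-/

open MeasureTheory ProbabilityTheory Real
open scoped NNReal

section

variable {ι : Type*} [Fintype ι]

theorem integral_exp_sum_mul_pi_gaussianReal (m : ι → ℝ) (v : ι → ℝ≥0) (c : ι → ℝ) :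
    ∫ t, exp (∑ i, c i * t i) ∂(Measure.pi fun i => gaussianReal (m i) (v i))
      = exp (∑ i, (m i * c i + v i * c i ^ 2 / 2)) := by
  simp_rw [exp_sum]
  rw [integral_fintype_prod_eq_prod fun i s => exp (c i * s)]
  refine Finset.prod_congr rfl fun i _ => ?_
  exact congrFun (mgf_fun_id_gaussianReal (μ := m i) (v := v i)) (c i)

theorem integral_exp_sum_mul_sub_half_sq_pi_gaussianReal_zero_one (c : ι → ℝ) :
    ∫ t, exp (∑ i, c i * t i - (∑ i, c i ^ 2) / 2) ∂(Measure.pi fun _ : ι => gaussianReal 0 1)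
      = 1 := by
  simp_rw [exp_sub]
  rw [integral_div, integral_exp_sum_mul_pi_gaussianReal, div_eq_one_iff_eq (exp_pos _).ne',
    Finset.sum_div]
  simp

theorem exp_sum_mul_sub_half_sq_mul_exp_sum_mul_sub_half_sq (t x y : ι → ℝ) :
    exp (∑ i, t i * x i - (∑ i, x i ^ 2) / 2) * exp (∑ i, t i * y i - (∑ i, y i ^ 2) / 2)
      = exp (∑ i, x i * y i)
        * exp (∑ i, (x i + y i) * t i - (∑ i, (x i + y i) ^ 2) / 2) := by
  rw [← exp_add, ← exp_add]
  congr 1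
  simp only [add_sq, add_mul, Finset.sum_add_distrib, mul_assoc, ← Finset.mul_sum,
    mul_comm (t _)]
  ring

end

theorem prf_unbiased_general {Ω : Type*} [MeasurableSpace Ω] (μ : Measure Ω)
    (d : ℕ) (w : Ω → (Fin d → ℝ)) (hw : Measurable w)
    (hmap : Measure.map w μ = Measure.pi (fun _ : Fin d => gaussianReal 0 1))
    (x y : Fin d → ℝ) :
    ∫ ω, Real.exp (∑ i, w ω i * x i - (∑ i, x i ^ 2) / 2)
        * Real.exp (∑ i, w ω i * y i - (∑ i, y i ^ 2) / 2) ∂μ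
      = Real.exp (∑ i, x i * y i) := by
  simp_rw [exp_sum_mul_sub_half_sq_mul_exp_sum_mul_sub_half_sq]
  have hcont : Continuous fun t : Fin d → ℝ =>
      exp (∑ i, (x i + y i) * t i - (∑ i, (x i + y i) ^ 2) / 2) := by fun_prop
  rw [integral_const_mul, ← integral_map hw.aemeasurable hcont.aestronglyMeasurable, hmap,
    integral_exp_sum_mul_sub_half_sq_pi_gaussianReal_zero_one, mul_one]

/-- The single positive random feature estimator
`Z = exp(wᵀx - ‖x‖²/2) · exp(wᵀy - ‖y‖²/2)` with `w ~ N(0, I_d)` is an unbiased estimator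
of the softmax kernel: `E[Z] = exp(xᵀy)`. -/
theorem prf_unbiased {Ω : Type*} [MeasurableSpace Ω] (μ : Measure Ω)
    [IsProbabilityMeasure μ] (d : ℕ) (w : Ω → (Fin d → ℝ)) (hw : Measurable w)
    (hmap : Measure.map w μ = Measure.pi (fun _ : Fin d => gaussianReal 0 1))
    (x y : Fin d → ℝ) :
    ∫ ω, Real.exp (∑ i, w ω i * x i - (∑ i, x i ^ 2) / 2)
        * Real.exp (∑ i, w ω i * y i - (∑ i, y i ^ 2) / 2) ∂μ
      = Real.exp (∑ i, x i * y i) :=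
  prf_unbiased_general μ d w hw hmap x y
end

section
/- Let w ~ N(0, I_d) and x, y ∈ ℝ^d, and Z = exp(wᵀx - ‖x‖²/2) exp(wᵀy - ‖y‖²/2). Then Var(Z) = exp(‖x+y‖²) · SM(x,y)² · (1 - exp(-‖x+y‖²)), where SM(x,y) = exp(xᵀy). -/
open MeasureTheory ProbabilityTheory
open scoped ENNReal NNReal

lemma gauss_pdf_shift (c t : ℝ) :
    Real.exp (c * t) * gaussianPDFReal 0 1 t
      = Real.exp (c ^ 2 / 2) * gaussianPDFReal c 1 t := by
  unfold gaussianPDFReal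
  rw [mul_left_comm (Real.exp (c * t)), ← Real.exp_add,
    mul_left_comm (Real.exp (c ^ 2 / 2)), ← Real.exp_add]
  congr 2
  push_cast
  ring

lemma integrable_exp_gauss (c : ℝ) :
    Integrable (fun t => Real.exp (c * t)) (gaussianReal 0 1) := by
  rw [gaussianReal_of_var_ne_zero _ one_ne_zero, gaussianPDF_def]
  have hmeas : Measurable fun t => (gaussianPDFReal 0 1 t).toNNReal :=
    (measurable_gaussianPDFReal 0 1).real_toNNReal
  rw [show (fun x => ENNReal.ofReal (gaussianPDFReal 0 1 x))
      = fun x => ((gaussianPDFReal 0 1 x).toNNReal : ℝ≥0∞) from rfl]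
  rw [integrable_withDensity_iff_integrable_smul hmeas]
  have : (fun t => ((gaussianPDFReal 0 1 t).toNNReal) • Real.exp (c * t))
      = fun t => Real.exp (c ^ 2 / 2) * gaussianPDFReal c 1 t := by
    funext t
    rw [NNReal.smul_def, smul_eq_mul, Real.coe_toNNReal _ (gaussianPDFReal_nonneg 0 1 t),
      mul_comm, gauss_pdf_shift]
  rw [this]
  exact (integrable_gaussianPDFReal c 1).const_mul _

lemma integral_exp_gauss (c : ℝ) :
    ∫ t, Real.exp (c * t) ∂(gaussianReal 0 1) = Real.exp (c ^ 2 / 2) := by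
  rw [gaussianReal_of_var_ne_zero _ one_ne_zero, gaussianPDF_def]
  have hmeas : Measurable fun t => (gaussianPDFReal 0 1 t).toNNReal :=
    (measurable_gaussianPDFReal 0 1).real_toNNReal
  rw [show (fun x => ENNReal.ofReal (gaussianPDFReal 0 1 x))
      = fun x => ((gaussianPDFReal 0 1 x).toNNReal : ℝ≥0∞) from rfl]
  rw [integral_withDensity_eq_integral_smul hmeas]
  have : (fun t => ((gaussianPDFReal 0 1 t).toNNReal) • Real.exp (c * t))
      = fun t => Real.exp (c ^ 2 / 2) * gaussianPDFReal c 1 t := by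
    funext t
    rw [NNReal.smul_def, smul_eq_mul, Real.coe_toNNReal _ (gaussianPDFReal_nonneg 0 1 t),
      mul_comm, gauss_pdf_shift]
  rw [this, integral_const_mul, integral_gaussianPDFReal_eq_one c one_ne_zero, mul_one]

lemma pi_gauss_integrable (d : ℕ) (c : Fin d → ℝ) :
    Integrable (fun v : Fin d → ℝ => ∏ i, Real.exp (c i * v i))
      (Measure.pi fun _ : Fin d => gaussianReal 0 1) := by
  letI : MeasureSpace ℝ := ⟨gaussianReal 0 1⟩
  haveI : SigmaFinite (volume : Measure ℝ) := by
    show SigmaFinite (gaussianReal 0 1); infer_instance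
  have h : Integrable (fun v : Fin d → ℝ => ∏ i, Real.exp (c i * v i)) volume :=
    Integrable.fintype_prod (f := fun i (t : ℝ) => Real.exp (c i * t))
      (fun i => integrable_exp_gauss (c i))
  rw [volume_pi] at h
  exact h

lemma pi_gauss_integral (d : ℕ) (c : Fin d → ℝ) :
    (∫ v : Fin d → ℝ, ∏ i, Real.exp (c i * v i)
        ∂(Measure.pi fun _ : Fin d => gaussianReal 0 1))
      = ∏ i, ∫ t, Real.exp (c i * t) ∂(gaussianReal 0 1) := by
  letI : MeasureSpace ℝ := ⟨gaussianReal 0 1⟩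
  haveI : SigmaFinite (volume : Measure ℝ) := by
    show SigmaFinite (gaussianReal 0 1); infer_instance
  have h := MeasureTheory.integral_fintype_prod_eq_prod (ι := Fin d)
    (fun i (t : ℝ) => Real.exp (c i * t)) (μ := fun _ => gaussianReal 0 1)
  exact h

lemma exp_sum_eq_prod (d : ℕ) (c : Fin d → ℝ) (v : Fin d → ℝ) :
    Real.exp (∑ i, v i * c i) = ∏ i, Real.exp (c i * v i) := by
  rw [← Real.exp_sum]
  congr 1
  exact Finset.sum_congr rfl fun i _ => mul_comm _ _

lemma integrable_exp_sum {Ω : Type*} [MeasurableSpace Ω] (μ : Measure Ω)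
    [IsProbabilityMeasure μ] (d : ℕ) (w : Ω → (Fin d → ℝ)) (hw : Measurable w)
    (hmap : Measure.map w μ = Measure.pi (fun _ : Fin d => gaussianReal 0 1))
    (c : Fin d → ℝ) :
    Integrable (fun ω => Real.exp (∑ i, w ω i * c i)) μ := by
  have hmeas : Measurable fun v : Fin d → ℝ => Real.exp (∑ i, v i * c i) := by
    apply Real.measurable_exp.comp
    exact Finset.measurable_sum _ (fun i _ => (measurable_pi_apply i).mul_const _)
  have h1 : Integrable (fun v : Fin d → ℝ => Real.exp (∑ i, v i * c i)) (Measure.map w μ) := by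
    rw [hmap]
    have := pi_gauss_integrable d c
    apply this.congr
    filter_upwards with v using (exp_sum_eq_prod d c v).symm
  exact (integrable_map_measure hmeas.aestronglyMeasurable hw.aemeasurable).mp h1

lemma integral_exp_sum {Ω : Type*} [MeasurableSpace Ω] (μ : Measure Ω)
    [IsProbabilityMeasure μ] (d : ℕ) (w : Ω → (Fin d → ℝ)) (hw : Measurable w)
    (hmap : Measure.map w μ = Measure.pi (fun _ : Fin d => gaussianReal 0 1))
    (c : Fin d → ℝ) :
    ∫ ω, Real.exp (∑ i, w ω i * c i) ∂μ = Real.exp (∑ i, c i ^ 2 / 2) := by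
  have hmeas : Measurable fun v : Fin d → ℝ => Real.exp (∑ i, v i * c i) := by
    apply Real.measurable_exp.comp
    exact Finset.measurable_sum _ (fun i _ => (measurable_pi_apply i).mul_const _)
  calc ∫ ω, Real.exp (∑ i, w ω i * c i) ∂μ
      = ∫ v, Real.exp (∑ i, v i * c i) ∂(Measure.map w μ) :=
        (integral_map hw.aemeasurable hmeas.aestronglyMeasurable).symm
    _ = ∫ v, ∏ i, Real.exp (c i * v i)
          ∂(Measure.pi (fun _ : Fin d => gaussianReal 0 1)) := by
        rw [hmap]; congr 1; funext v; exact exp_sum_eq_prod d c v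
    _ = ∏ i, ∫ t, Real.exp (c i * t) ∂(gaussianReal 0 1) := pi_gauss_integral d c
    _ = ∏ i, Real.exp (c i ^ 2 / 2) :=
        Finset.prod_congr rfl fun i _ => integral_exp_gauss (c i)
    _ = Real.exp (∑ i, c i ^ 2 / 2) := (Real.exp_sum _ _).symm

lemma final_alg (K P : ℝ) :
    Real.exp (-(2*K)) * Real.exp (2*(2*K+2*P)) - (Real.exp (-K) * Real.exp ((2*K+2*P)/2))^2
    = Real.exp (2*K+2*P) * Real.exp P ^ 2 * (1 - Real.exp (-(2*K+2*P))) := by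
  simp only [pow_two, mul_sub, mul_one]
  simp only [← Real.exp_add]
  congr 1
  · congr 1; ring
  · congr 1; ring

/-- Variance of the single positive random feature estimator of the softmax kernel:
`Var(Z) = exp(‖x+y‖²) · SM(x,y)² · (1 - exp(-‖x+y‖²))` where `SM(x,y) = exp(xᵀy)` and
`Z = exp(wᵀx - ‖x‖²/2) exp(wᵀy - ‖y‖²/2)` with `w ~ N(0, I_d)`. -/
theorem prf_variance {Ω : Type*} [MeasurableSpace Ω] (μ : Measure Ω)
    [IsProbabilityMeasure μ] (d : ℕ) (w : Ω → (Fin d → ℝ)) (hw : Measurable w)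
    (hmap : Measure.map w μ = Measure.pi (fun _ : Fin d => gaussianReal 0 1))
    (x y : Fin d → ℝ) :
    variance (fun ω => Real.exp (∑ i, w ω i * x i - (∑ i, x i ^ 2) / 2)
        * Real.exp (∑ i, w ω i * y i - (∑ i, y i ^ 2) / 2)) μ
      = Real.exp (∑ i, (x i + y i) ^ 2) * Real.exp (∑ i, x i * y i) ^ 2
        * (1 - Real.exp (-(∑ i, (x i + y i) ^ 2))) := by
  set K : ℝ := (∑ i, x i ^ 2) / 2 + (∑ i, y i ^ 2) / 2 with hK
  set c : Fin d → ℝ := fun i => x i + y i with hc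
  have hZ : (fun ω => Real.exp (∑ i, w ω i * x i - (∑ i, x i ^ 2) / 2)
      * Real.exp (∑ i, w ω i * y i - (∑ i, y i ^ 2) / 2))
      = fun ω => Real.exp (-K) * Real.exp (∑ i, w ω i * c i) := by
    funext ω
    rw [← Real.exp_add, ← Real.exp_add]
    congr 1
    simp only [hc, hK, mul_add, Finset.sum_add_distrib]
    ring
  have hZ2 : (fun ω => (Real.exp (-K) * Real.exp (∑ i, w ω i * c i)) ^ 2)
      = fun ω => Real.exp (-(2*K)) * Real.exp (∑ i, w ω i * (2 * c i)) := by
    funext ω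
    have h : ∑ i, w ω i * (2 * c i) = 2 * ∑ i, w ω i * c i := by
      rw [Finset.mul_sum]
      exact Finset.sum_congr rfl fun i _ => by ring
    rw [h, mul_pow, ← Real.exp_nat_mul, ← Real.exp_nat_mul]
    push_cast
    congr 2
    ring
  have hmeasZ : AEStronglyMeasurable
      (fun ω => Real.exp (-K) * Real.exp (∑ i, w ω i * c i)) μ := by
    apply Measurable.aestronglyMeasurable
    apply Measurable.const_mul
    apply Real.measurable_exp.comp
    exact Finset.measurable_sum _ (fun i _ => ((measurable_pi_apply i).comp hw).mul_const _)
  have hmemℒp : MemLp (fun ω => Real.exp (-K) * Real.exp (∑ i, w ω i * c i)) 2 μ := by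
    rw [memLp_two_iff_integrable_sq hmeasZ]
    rw [show (fun ω => (Real.exp (-K) * Real.exp (∑ i, w ω i * c i)) ^ 2)
        = fun ω => Real.exp (-(2*K)) * Real.exp (∑ i, w ω i * (2 * c i)) from hZ2]
    exact (integrable_exp_sum μ d w hw hmap (fun i => 2 * c i)).const_mul _
  rw [hZ, variance_eq_sub hmemℒp]
  simp only [Pi.pow_apply]
  have hE : ∫ ω, Real.exp (-K) * Real.exp (∑ i, w ω i * c i) ∂μ
      = Real.exp (-K) * Real.exp (∑ i, c i ^ 2 / 2) := by
    rw [integral_const_mul, integral_exp_sum μ d w hw hmap c]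
  have hE2 : ∫ ω, (Real.exp (-K) * Real.exp (∑ i, w ω i * c i)) ^ 2 ∂μ
      = Real.exp (-(2*K)) * Real.exp (∑ i, (2 * c i) ^ 2 / 2) := by
    rw [show (fun ω => (Real.exp (-K) * Real.exp (∑ i, w ω i * c i)) ^ 2)
        = fun ω => Real.exp (-(2*K)) * Real.exp (∑ i, w ω i * (2 * c i)) from hZ2]
    rw [integral_const_mul, integral_exp_sum μ d w hw hmap (fun i => 2 * c i)]
  rw [hE2, hE]
  have hS : (∑ i, c i ^ 2) = 2 * K + 2 * ∑ i, x i * y i := by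
    simp only [hc, hK, add_sq, Finset.sum_add_distrib, Finset.mul_sum]
    ring
  have h2 : (∑ i, (2 * c i) ^ 2 / 2) = 2 * (∑ i, c i ^ 2) := by
    rw [Finset.mul_sum]
    exact Finset.sum_congr rfl fun i _ => by ring
  have hhalf : (∑ i, c i ^ 2 / 2) = (∑ i, c i ^ 2) / 2 := by
    rw [Finset.sum_div]
  have hxy : (∑ i, (x i + y i) ^ 2) = ∑ i, c i ^ 2 := rfl
  rw [h2, hhalf, hxy, hS]
  exact final_alg K (∑ i, x i * y i)
end

section
/- Let q, k ∈ ℝ^d with ‖q‖ ≤ r and ‖k‖ ≤ r, let τ > 0, and let SM̂_m be the positive random feature estimator of the softmax kernel with m i.i.d. Gaussian features applied to q/√τ and k/√τ. Then Var(SM̂_m(q/√τ, k/√τ)) ≤ exp(6r²/τ)/m, and hence for any ε ∈ (0,1), with probability at least 1 - ε, |SM̂_m(q/√τ, k/√τ) - exp(qᵀk/τ)| ≤ sqrt(exp(6r²/τ)/(mε)). -/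
/-!
Write `φ_x(w) = exp (wᵀx - ‖x‖²/2)`, so that the estimator is the sample mean of `m` i.i.d.
copies of `φ_x(w) φ_y(w)` with `w` standard Gaussian. The Gaussian moment generating function
`E exp (wᵀa) = exp (‖a‖²/2)` gives `E φ_a = 1` and `E φ_a² = exp ‖a‖²`, and
`φ_x φ_y = exp (xᵀy) φ_{x+y}`; hence the estimator is unbiased with variance
`exp (xᵀy)² (exp ‖x+y‖² - 1) / m`. For `x = q/√τ`, `y = k/√τ` Cauchy–Schwarz bounds
`2 xᵀy + ‖x+y‖²` by `6r²/τ`, and Chebyshev's inequality turns the variance bound into the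
deviation bound.
-/

open MeasureTheory ProbabilityTheory Real

section GaussianPi

variable {ι : Type*} [Fintype ι]

local notation "γ" => Measure.pi fun _ : ι => gaussianReal 0 1

lemma exp_sum_mul_eq_prod (a v : ι → ℝ) : exp (∑ j, v j * a j) = ∏ j, exp (a j * v j) := by
  rw [exp_sum]
  simp only [mul_comm]

lemma integrable_exp_sum_mul_gaussianPi (a : ι → ℝ) :
    Integrable (fun v => exp (∑ j, v j * a j)) γ := by
  simp only [exp_sum_mul_eq_prod]
  exact Integrable.fintype_prod fun j => integrable_exp_mul_gaussianReal (a j)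

lemma integral_exp_sum_mul_gaussianPi (a : ι → ℝ) :
    ∫ v, exp (∑ j, v j * a j) ∂γ = exp ((∑ j, a j ^ 2) / 2) := by
  simp only [exp_sum_mul_eq_prod, integral_fintype_prod_eq_prod (fun j x => exp (a j * x))]
  have hmgf (t : ℝ) : ∫ x, exp (t * x) ∂gaussianReal 0 1 = exp (t ^ 2 / 2) := by
    simpa [mgf] using congrFun (mgf_fun_id_gaussianReal (μ := 0) (v := 1)) t
  simp only [hmgf, ← exp_sum, Finset.sum_div]

noncomputable def posFeature (x v : ι → ℝ) : ℝ := exp (∑ j, v j * x j - (∑ j, x j ^ 2) / 2)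

lemma posFeature_eq (x v : ι → ℝ) :
    posFeature x v = exp (-(∑ j, x j ^ 2) / 2) * exp (∑ j, v j * x j) := by
  rw [posFeature, ← exp_add]
  ring_nf

@[fun_prop]
lemma measurable_posFeature (x : ι → ℝ) : Measurable (posFeature x) := by
  unfold posFeature
  fun_prop

lemma integrable_posFeature (x : ι → ℝ) : Integrable (posFeature x) γ := by
  simp only [funext (posFeature_eq x)]
  exact (integrable_exp_sum_mul_gaussianPi x).const_mul _

lemma integral_posFeature (x : ι → ℝ) : ∫ v, posFeature x v ∂γ = 1 := by
  rw [funext (posFeature_eq x), integral_const_mul, integral_exp_sum_mul_gaussianPi, ← exp_add]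
  simp [neg_div]

lemma posFeature_mul_posFeature (x y v : ι → ℝ) :
    posFeature x v * posFeature y v = exp (∑ j, x j * y j) * posFeature (x + y) v := by
  simp only [posFeature, ← exp_add]
  congr 1
  simp only [Pi.add_apply, add_sq, mul_add, mul_assoc, Finset.sum_add_distrib, ← Finset.mul_sum]
  ring

lemma posFeature_sq (x v : ι → ℝ) :
    posFeature x v ^ 2 = exp (∑ j, x j ^ 2) * posFeature (2 • x) v := by
  simpa [two_mul, two_nsmul, sq] using posFeature_mul_posFeature x x v

lemma integral_posFeature_sq (x : ι → ℝ) : ∫ v, posFeature x v ^ 2 ∂γ = exp (∑ j, x j ^ 2) := by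
  simp only [posFeature_sq, integral_const_mul, integral_posFeature, mul_one]

lemma memLp_two_posFeature (x : ι → ℝ) : MemLp (posFeature x) 2 γ := by
  refine (memLp_two_iff_integrable_sq (measurable_posFeature x).aestronglyMeasurable).2 ?_
  simp only [posFeature_sq]
  exact (integrable_posFeature _).const_mul _

lemma variance_posFeature (x : ι → ℝ) : Var[posFeature x; γ] = exp (∑ j, x j ^ 2) - 1 := by
  rw [variance_eq_sub (memLp_two_posFeature x)]
  simp only [Pi.pow_apply, integral_posFeature_sq, integral_posFeature, one_pow]

lemma memLp_two_posFeature_mul (x y : ι → ℝ) :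
    MemLp (fun v => posFeature x v * posFeature y v) 2 γ := by
  simp only [posFeature_mul_posFeature]
  exact (memLp_two_posFeature _).const_mul _

lemma integral_posFeature_mul (x y : ι → ℝ) :
    ∫ v, posFeature x v * posFeature y v ∂γ = exp (∑ j, x j * y j) := by
  simp only [posFeature_mul_posFeature, integral_const_mul, integral_posFeature, mul_one]

lemma variance_posFeature_mul (x y : ι → ℝ) :
    Var[fun v => posFeature x v * posFeature y v; γ]
      = exp (∑ j, x j * y j) ^ 2 * (exp (∑ j, (x j + y j) ^ 2) - 1) := by
  simp only [posFeature_mul_posFeature, variance_const_mul, variance_posFeature, Pi.add_apply]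

lemma variance_posFeature_mul_le (x y : ι → ℝ) :
    Var[fun v => posFeature x v * posFeature y v; γ]
      ≤ exp (2 * ∑ j, x j * y j + ∑ j, (x j + y j) ^ 2) := by
  rw [variance_posFeature_mul, exp_add, ← exp_nat_mul]
  push_cast
  gcongr
  linarith

end GaussianPi

section SampleMean

variable {Ω E : Type*} [MeasurableSpace Ω] [MeasurableSpace E] {μ : Measure Ω}
  {ν : Measure E} {m : ℕ} {w : Fin m → Ω → E} {f : E → ℝ}

lemma memLp_two_sampleMean (hw : ∀ i, MeasurePreserving (w i) μ ν) (hf : MemLp f 2 ν) :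
    MemLp (fun ω => (1 / (m : ℝ)) * ∑ i, f (w i ω)) 2 μ :=
  (memLp_finsetSum _ fun i _ => hf.comp_measurePreserving (hw i)).const_mul _

lemma integral_sampleMean (hm : m ≠ 0) (hw : ∀ i, MeasurePreserving (w i) μ ν)
    (hf : Integrable f ν) :
    μ[fun ω => (1 / (m : ℝ)) * ∑ i, f (w i ω)] = ∫ x, f x ∂ν := by
  have hcomp (i : Fin m) : ∫ ω, f (w i ω) ∂μ = ∫ x, f x ∂ν := by
    rw [← (hw i).map_eq] at hf ⊢
    exact (integral_map (hw i).aemeasurable hf.1).symm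
  rw [integral_const_mul, integral_finsetSum (f := fun i ω => f (w i ω)) _
    fun i _ => (hw i).integrable_comp_of_integrable hf]
  simp only [hcomp, Finset.sum_const, Finset.card_univ, Fintype.card_fin, nsmul_eq_mul]
  field_simp

lemma variance_sampleMean (hw : ∀ i, MeasurePreserving (w i) μ ν) (hindep : iIndepFun w μ)
    (hfm : Measurable f) (hf : MemLp f 2 ν) :
    Var[fun ω => (1 / (m : ℝ)) * ∑ i, f (w i ω); μ] = Var[f; ν] / m := by
  have hsum : Var[fun ω => ∑ i, f (w i ω); μ] = m * Var[f; ν] := by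
    rw [← Finset.sum_fn, IndepFun.variance_sum (X := fun i ω => f (w i ω))
      (fun i _ => hf.comp_measurePreserving (hw i))
      (fun i _ j _ hij => (hindep.indepFun hij).comp hfm hfm)]
    simp [fun i => (hw i).variance_fun_comp hfm.aemeasurable]
  rw [variance_const_mul, hsum]
  rcases eq_or_ne (m : ℝ) 0 with h | h
  · simp [h]
  · field_simp

end SampleMean

lemma ofReal_one_sub_le_measure_abs_sub_integral_le {Ω : Type*} [MeasurableSpace Ω]
    {μ : Measure Ω} [IsProbabilityMeasure μ] {X : Ω → ℝ} (hX : MemLp X 2 μ) {V ε : ℝ}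
    (hV : Var[X; μ] ≤ V) (hV0 : 0 < V) (hε : 0 < ε) :
    ENNReal.ofReal (1 - ε) ≤ μ {ω | |X ω - μ[X]| ≤ √(V / ε)} := by
  set c := √(V / ε)
  have hc : 0 < c := sqrt_pos.2 (div_pos hV0 hε)
  have htail : μ {ω | c ≤ |X ω - μ[X]|} ≤ ENNReal.ofReal ε := by
    refine (meas_ge_le_variance_div_sq hX hc).trans (ENNReal.ofReal_le_ofReal ?_)
    rw [sq_sqrt (div_pos hV0 hε).le, div_div_eq_mul_div, div_le_iff₀ hV0]
    nlinarith
  have hcompl : {ω | |X ω - μ[X]| ≤ c}ᶜ ⊆ {ω | c ≤ |X ω - μ[X]|} :=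
    fun _ h => (lt_of_not_ge (Set.notMem_ofPred_iff.1 h)).le
  calc ENNReal.ofReal (1 - ε) = 1 - ENNReal.ofReal ε := by
        rw [ENNReal.ofReal_sub _ hε.le, ENNReal.ofReal_one]
    _ ≤ 1 - μ {ω | |X ω - μ[X]| ≤ c}ᶜ := tsub_le_tsub_left ((measure_mono hcompl).trans htail) 1
    _ ≤ μ {ω | |X ω - μ[X]| ≤ c} := by
        rw [tsub_le_iff_right, ← measure_univ (μ := μ)]
        exact measure_univ_le_add_compl _

lemma two_mul_sum_mul_add_sum_add_sq_le {ι : Type*} [Fintype ι] {x y : ι → ℝ} {R : ℝ}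
    (hx : ∑ j, x j ^ 2 ≤ R) (hy : ∑ j, y j ^ 2 ≤ R) :
    2 * ∑ j, x j * y j + ∑ j, (x j + y j) ^ 2 ≤ 6 * R := by
  have hcs : ∑ j, x j * y j ≤ R :=
    calc ∑ j, x j * y j ≤ √(∑ j, x j ^ 2) * √(∑ j, y j ^ 2) :=
          sum_mul_le_sqrt_mul_sqrt _ x y
      _ ≤ √R * √R := by gcongr
      _ = R := mul_self_sqrt ((Finset.sum_nonneg fun j _ => sq_nonneg (x j)).trans hx)
  have hexpand : ∑ j, (x j + y j) ^ 2 = ∑ j, x j ^ 2 + 2 * ∑ j, x j * y j + ∑ j, y j ^ 2 := by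
    simp only [add_sq, mul_assoc, Finset.sum_add_distrib, ← Finset.mul_sum]
  linarith

lemma sum_div_sqrt_mul_div_sqrt {ι : Type*} [Fintype ι] (q k : ι → ℝ) {τ : ℝ} (hτ : 0 ≤ τ) :
    ∑ j, q j / √τ * (k j / √τ) = (∑ j, q j * k j) / τ := by
  simp only [div_mul_div_comm, mul_self_sqrt hτ, Finset.sum_div]

theorem softmax_kernel_approx_error_general {Ω : Type*} [MeasurableSpace Ω] (μ : Measure Ω)
    [IsProbabilityMeasure μ] (d m : ℕ) (hm : 1 ≤ m) (w : Fin m → Ω → (Fin d → ℝ))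
    (hw : ∀ i, Measurable (w i))
    (hindep : iIndepFun w μ)
    (hmap : ∀ i, Measure.map (w i) μ = Measure.pi (fun _ : Fin d => gaussianReal 0 1))
    (q k : Fin d → ℝ) (r : ℝ)
    (hq : Real.sqrt (∑ j, q j ^ 2) ≤ r) (hk : Real.sqrt (∑ j, k j ^ 2) ≤ r)
    (τ : ℝ) (hτ : 0 < τ) (ε : ℝ) (hε : ε ∈ Set.Ioo (0 : ℝ) 1) :
    (variance (fun ω => (1 / (m : ℝ)) * ∑ i,
        Real.exp (∑ j, w i ω j * (q j / Real.sqrt τ) - (∑ j, (q j / Real.sqrt τ) ^ 2) / 2)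
        * Real.exp (∑ j, w i ω j * (k j / Real.sqrt τ)
            - (∑ j, (k j / Real.sqrt τ) ^ 2) / 2)) μ
      ≤ Real.exp (6 * r ^ 2 / τ) / m) ∧
    ENNReal.ofReal (1 - ε) ≤ μ {ω |
      |(1 / (m : ℝ)) * (∑ i,
          Real.exp (∑ j, w i ω j * (q j / Real.sqrt τ) - (∑ j, (q j / Real.sqrt τ) ^ 2) / 2)
          * Real.exp (∑ j, w i ω j * (k j / Real.sqrt τ)
              - (∑ j, (k j / Real.sqrt τ) ^ 2) / 2))
        - Real.exp ((∑ j, q j * k j) / τ)|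
      ≤ Real.sqrt (Real.exp (6 * r ^ 2 / τ) / (m * ε))} := by
  set x : Fin d → ℝ := fun j => q j / √τ
  set y : Fin d → ℝ := fun j => k j / √τ
  have hw' (i : Fin m) : MeasurePreserving (w i) μ (Measure.pi fun _ => gaussianReal 0 1) :=
    ⟨hw i, hmap i⟩
  have hscaled {z : Fin d → ℝ} (hz : √(∑ j, z j ^ 2) ≤ r) : ∑ j, (z j / √τ) ^ 2 ≤ r ^ 2 / τ := by
    simp only [div_pow, sq_sqrt hτ.le, ← Finset.sum_div]
    gcongr
    exact (sqrt_le_iff.1 hz).2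
  have hfeature := memLp_two_posFeature_mul x y
  have hvar : Var[fun v => posFeature x v * posFeature y v;
      Measure.pi fun _ => gaussianReal 0 1] ≤ exp (6 * r ^ 2 / τ) :=
    (variance_posFeature_mul_le x y).trans <| exp_le_exp.2 <| by
      rw [mul_div_assoc]
      exact two_mul_sum_mul_add_sum_add_sq_le (hscaled hq) (hscaled hk)
  have hvar_mean := (variance_sampleMean hw' hindep (by fun_prop) hfeature).trans_le
    (div_le_div_of_nonneg_right hvar m.cast_nonneg)
  refine ⟨hvar_mean, ?_⟩
  have hmean := integral_sampleMean (by omega) hw' (hfeature.integrable one_le_two)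
  rw [integral_posFeature_mul, sum_div_sqrt_mul_div_sqrt q k hτ.le] at hmean
  have hcheb := ofReal_one_sub_le_measure_abs_sub_integral_le (memLp_two_sampleMean hw' hfeature)
    hvar_mean (by positivity) hε.1
  rwa [hmean, div_div] at hcheb

/-- Approximation error for the softmax kernel (Theorem 1): with `‖q‖, ‖k‖ ≤ r` and
temperature `τ > 0`, the `m`-feature positive random feature estimator applied to
`q/√τ, k/√τ` has variance at most `exp(6r²/τ)/m`, hence with probability at least `1 - ε`
the approximation error to `exp(qᵀk/τ)` is at most `sqrt(exp(6r²/τ)/(mε))`. -/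
theorem softmax_kernel_approx_error {Ω : Type*} [MeasurableSpace Ω] (μ : Measure Ω)
    [IsProbabilityMeasure μ] (d m : ℕ) (hm : 1 ≤ m) (w : Fin m → Ω → (Fin d → ℝ))
    (hw : ∀ i, Measurable (w i))
    (hindep : iIndepFun w μ)
    (hmap : ∀ i, Measure.map (w i) μ = Measure.pi (fun _ : Fin d => gaussianReal 0 1))
    (q k : Fin d → ℝ) (r : ℝ) (hr : 0 < r)
    (hq : Real.sqrt (∑ j, q j ^ 2) ≤ r) (hk : Real.sqrt (∑ j, k j ^ 2) ≤ r)
    (τ : ℝ) (hτ : 0 < τ) (ε : ℝ) (hε : ε ∈ Set.Ioo (0 : ℝ) 1) :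
    (variance (fun ω => (1 / (m : ℝ)) * ∑ i,
        Real.exp (∑ j, w i ω j * (q j / Real.sqrt τ) - (∑ j, (q j / Real.sqrt τ) ^ 2) / 2)
        * Real.exp (∑ j, w i ω j * (k j / Real.sqrt τ)
            - (∑ j, (k j / Real.sqrt τ) ^ 2) / 2)) μ
      ≤ Real.exp (6 * r ^ 2 / τ) / m) ∧
    ENNReal.ofReal (1 - ε) ≤ μ {ω |
      |(1 / (m : ℝ)) * (∑ i,
          Real.exp (∑ j, w i ω j * (q j / Real.sqrt τ) - (∑ j, (q j / Real.sqrt τ) ^ 2) / 2)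
          * Real.exp (∑ j, w i ω j * (k j / Real.sqrt τ)
              - (∑ j, (k j / Real.sqrt τ) ^ 2) / 2))
        - Real.exp ((∑ j, q j * k j) / τ)|
      ≤ Real.sqrt (Real.exp (6 * r ^ 2 / τ) / (m * ε))} :=
  softmax_kernel_approx_error_general μ d m hm w hw hindep hmap q k r hq hk τ hτ ε hε
end
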